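/- dω = 0 (the structure (J,⟨·,·⟩) is almost Kähler, class W₂) if and only if v₀ = 0 and Dᵗ∘J' + J'∘D = 0 (i.e. D ∈ sp(n−1,ℝ)). -/

import Mathlib

open scoped BigOperators
open Matrix

noncomputable section

/-- The underlying `2n`-dimensional real vector space `ℝ^{2n}`, whose standard basis
plays the role of the orthonormal basis `e₀, e₁, …, e_{2n-1}`. -/
abbrev G (n : ℕ) := Fin (2*n) → ℝ

/-- The inner product `⟨·,·⟩` making the standard basis orthonormal. -/
def inn {n : ℕ} (x y : G n) : ℝ := ∑ i, x i * y i

/-- The standard basis vector `e k` (indexed by a natural number `k`). -/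
def E (n : ℕ) (k : ℕ) : G n := fun i => if (i : ℕ) = k then 1 else 0

/-- Membership in `a = span{e₂, …, e_{2n-1}}`. -/
def inA {n : ℕ} (x : G n) : Prop := ∀ i : Fin (2*n), (i : ℕ) < 2 → x i = 0

/-- The orthogonal almost complex structure `J e_{2i} = e_{2i+1}`, `J e_{2i+1} = -e_{2i}`. -/
def Jm (n : ℕ) : Matrix (Fin (2*n)) (Fin (2*n)) ℝ :=
  Matrix.of fun k l =>
    if (k : ℕ) = (l : ℕ) + 1 ∧ Even (l : ℕ) then (1 : ℝ)
    else if (l : ℕ) = (k : ℕ) + 1 ∧ Even (k : ℕ) then -1 else 0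

/-- `D` is (the extension by zero of) an endomorphism of `a`: it vanishes on
`span{e₀, e₁}` and takes values orthogonal to `span{e₀, e₁}`. -/
def DinA {n : ℕ} (D : Matrix (Fin (2*n)) (Fin (2*n)) ℝ) : Prop :=
  ∀ k l : Fin (2*n), ((k : ℕ) < 2 ∨ (l : ℕ) < 2) → D k l = 0

/-- The matrix of `L` determined by the data `μ, v₀, w₀, D`, i.e.
`L e₀ = 0`, `L e₁ = μ e₁ + v₀` and `L x = ⟨w₀, x⟩ e₁ + D x` for `x ∈ a`
(for `v₀, w₀ ∈ a` and `D` an endomorphism of `a`). -/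
def Lm {n : ℕ} (μ : ℝ) (v₀ w₀ : G n) (D : Matrix (Fin (2*n)) (Fin (2*n)) ℝ) :
    Matrix (Fin (2*n)) (Fin (2*n)) ℝ :=
  Matrix.of fun k l =>
    (if (k : ℕ) = 1 ∧ (l : ℕ) = 1 then μ else 0)
      + (if (l : ℕ) = 1 then v₀ k else 0)
      + (if (k : ℕ) = 1 then w₀ l else 0)
      + D k l

/-- The Lie bracket of the almost abelian Lie algebra `g = ℝ e₀ ⋉_L u`:
`[e₀, u] = L u` for `u ∈ u = span{e₁, …, e_{2n-1}}` and `[u, v] = 0` for `u, v ∈ u`. -/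
def br {n : ℕ} (L : Matrix (Fin (2*n)) (Fin (2*n)) ℝ) (x y : G n) : G n :=
  inn x (E n 0) • L.mulVec y - inn y (E n 0) • L.mulVec x

/-- `nabla` is the Levi-Civita connection of `⟨·,·⟩`, i.e. it satisfies the Koszul
formula `2⟨∇_x y, z⟩ = ⟨[x,y],z⟩ − ⟨[y,z],x⟩ + ⟨[z,x],y⟩`. -/
def Koszul {n : ℕ} (L : Matrix (Fin (2*n)) (Fin (2*n)) ℝ) (nabla : G n → G n → G n) : Prop :=
  ∀ x y z : G n, 2 * inn (nabla x y) z
    = inn (br L x y) z - inn (br L y z) x + inn (br L z x) y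

/-- `(∇_y J)(x) = ∇_y (Jx) − J ∇_y x`. -/
def covJ {n : ℕ} (nabla : G n → G n → G n) (y x : G n) : G n :=
  nabla y ((Jm n).mulVec x) - (Jm n).mulVec (nabla y x)

/-- The rough Laplacian
`(∇*∇J)(x) = Σ_i ((∇_{e_i}(∇_{e_i}J))(x) − (∇_{∇_{e_i}e_i} J)(x))`. -/
def roughLap {n : ℕ} (nabla : G n → G n → G n) (x : G n) : G n :=
  ∑ i : Fin (2*n),
    (nabla (E n i.val) (covJ nabla (E n i.val) x)
      - covJ nabla (E n i.val) (nabla (E n i.val) x)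
      - covJ nabla (nabla (E n i.val) (E n i.val)) x)

/-- `J` is harmonic: `J ∘ (∇*∇J) = (∇*∇J) ∘ J`. -/
def Harmonic {n : ℕ} (nabla : G n → G n → G n) : Prop :=
  ∀ x : G n, (Jm n).mulVec (roughLap nabla x) = roughLap nabla ((Jm n).mulVec x)

/-- Symmetric part of a matrix. -/
def symPart {n : ℕ} (M : Matrix (Fin (2*n)) (Fin (2*n)) ℝ) :
    Matrix (Fin (2*n)) (Fin (2*n)) ℝ := (1/2 : ℝ) • (M + Mᵀ)

/-- Skew-symmetric part of a matrix. -/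
def skewPart {n : ℕ} (M : Matrix (Fin (2*n)) (Fin (2*n)) ℝ) :
    Matrix (Fin (2*n)) (Fin (2*n)) ℝ := (1/2 : ℝ) • (M - Mᵀ)

/-- `γ = (v₀ + w₀)/2`. -/
def gam {n : ℕ} (v₀ w₀ : G n) : G n := (1/2 : ℝ) • (v₀ + w₀)

/-- `ρ = (v₀ − w₀)/2`. -/
def rho {n : ℕ} (v₀ w₀ : G n) : G n := (1/2 : ℝ) • (v₀ - w₀)

/-- The fundamental 2-form `ω(x,y) = ⟨Jx, y⟩`. -/
def om {n : ℕ} (x y : G n) : ℝ := inn ((Jm n).mulVec x) y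

/-- `(∇_x ω)(y,z) = −ω(∇_x y, z) − ω(y, ∇_x z)`. -/
def nablaOm {n : ℕ} (nabla : G n → G n → G n) (x y z : G n) : ℝ :=
  - om (nabla x y) z - om y (nabla x z)

/-- `dω(x,y,z) = −ω([x,y],z) − ω([y,z],x) − ω([z,x],y)`. -/
def dOm {n : ℕ} (L : Matrix (Fin (2*n)) (Fin (2*n)) ℝ) (x y z : G n) : ℝ :=
  - om (br L x y) z - om (br L y z) x - om (br L z x) y

/-- The codifferential `δω(x) = −Σ_i (∇_{e_i}ω)(e_i, x)`. -/
def deltaOm {n : ℕ} (nabla : G n → G n → G n) (x : G n) : ℝ :=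
  - ∑ i : Fin (2*n), nablaOm nabla (E n i.val) (E n i.val) x

/-- The Nijenhuis tensor `N(x,y) = [x,y] + J([Jx,y] + [x,Jy]) − [Jx,Jy]`. -/
def Nij {n : ℕ} (L : Matrix (Fin (2*n)) (Fin (2*n)) ℝ) (x y : G n) : G n :=
  br L x y
    + (Jm n).mulVec (br L ((Jm n).mulVec x) y + br L x ((Jm n).mulVec y))
    - br L ((Jm n).mulVec x) ((Jm n).mulVec y)

/-- `T⁻(x,y,z) = (∇_x ω)(y,z) − (∇_{Jx} ω)(Jy,z)`. -/
def Tminus {n : ℕ} (nabla : G n → G n → G n) (x y z : G n) : ℝ :=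
  nablaOm nabla x y z - nablaOm nabla ((Jm n).mulVec x) ((Jm n).mulVec y) z

/-- `T⁺(x,y,z) = (∇_x ω)(y,z) + (∇_{Jx} ω)(Jy,z)`. -/
def Tplus {n : ℕ} (nabla : G n → G n → G n) (x y z : G n) : ℝ :=
  nablaOm nabla x y z + nablaOm nabla ((Jm n).mulVec x) ((Jm n).mulVec y) z

/-- `U(x,y,z) = ⟨x,y⟩δω(z) − ⟨x,z⟩δω(y) − ⟨x,Jy⟩δω(Jz) + ⟨x,Jz⟩δω(Jy)`. -/
def Uten {n : ℕ} (nabla : G n → G n → G n) (x y z : G n) : ℝ :=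
  inn x y * deltaOm nabla z - inn x z * deltaOm nabla y
    - inn x ((Jm n).mulVec y) * deltaOm nabla ((Jm n).mulVec z)
    + inn x ((Jm n).mulVec z) * deltaOm nabla ((Jm n).mulVec y)

/-- The Lee form `θ(x) = −(1/(n−1)) δω(Jx)`. -/
def Lee {n : ℕ} (nabla : G n → G n → G n) (x : G n) : ℝ :=
  -(1/((n : ℝ) - 1)) * deltaOm nabla ((Jm n).mulVec x)

/-- The identity of `a`, extended by zero to `g`. -/
def Ia (n : ℕ) : Matrix (Fin (2*n)) (Fin (2*n)) ℝ :=
  Matrix.of fun k l => if k = l ∧ 2 ≤ (k : ℕ) then (1 : ℝ) else 0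

/-!
For `y, z ∈ u = e₀^⊥` one has `dω(e₀, y, z) = -(ω(Ly, z) + ω(y, Lz))`, and these values determine
`dω`. Since `Je₁ = -e₀` is orthogonal to `u`, the `e₁`-components of `Ly, Lz` drop out, leaving
`y₁ ω(v₀, z) - z₁ ω(v₀, y) + ⟨(DᵗJ + JD) y, z⟩`. Testing with `y = e₁, z = Jv₀` gives
`|Jv₀|² = 0`, and with `y ∈ a`, `z = (DᵗJ + JD) y` gives `D ∈ sp(n-1, ℝ)`; conversely `DᵗJ + JD`
kills `e₁` as well as `a`.
-/

section
variable {n : ℕ}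

lemma inn_eq_dotProduct (x y : G n) : inn x y = x ⬝ᵥ y := rfl

lemma inn_E (x : G n) {k : ℕ} (hk : k < 2 * n) : inn x (E n k) = x ⟨k, hk⟩ := by
  rw [inn, Finset.sum_eq_single ⟨k, hk⟩] <;> simp_all [E, Fin.ext_iff]

lemma inn_E_of_inA {x : G n} (hx : inA x) {k : ℕ} (hk : k < 2) : inn x (E n k) = 0 :=
  Finset.sum_eq_zero fun i _ => by
    by_cases h : (i : ℕ) = k
    · simp [E, h, hx i (h ▸ hk)]
    · simp [E, h]

lemma Jm_transpose : (Jm n)ᵀ = -Jm n := by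
  ext k l
  rw [transpose_apply, neg_apply]
  simp only [Jm, of_apply]
  split_ifs with h₁ h₂ <;> norm_num
  omega

lemma Jm_mulVec_apply_of_even (x : G n) {k j : Fin (2*n)} (hk : Even (k : ℕ))
    (hj : (j : ℕ) = k + 1) : (Jm n *ᵥ x) k = -x j := by
  rw [mulVec, dotProduct, Finset.sum_eq_single j]
  · simp [Jm, hj, hk]
  · intro m _ hm
    have : (m : ℕ) ≠ j := fun h => hm (Fin.ext h)
    simp only [Jm, of_apply]
    split_ifs <;> simp_all [Nat.even_add_one]
  · simp

lemma Jm_mulVec_apply_of_odd (x : G n) {k j : Fin (2*n)} (hj : Even (j : ℕ))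
    (hk : (k : ℕ) = j + 1) : (Jm n *ᵥ x) k = x j := by
  rw [mulVec, dotProduct, Finset.sum_eq_single j]
  · simp [Jm, hk, hj]
  · intro m _ hm
    have : (m : ℕ) ≠ j := fun h => hm (Fin.ext h)
    simp only [Jm, of_apply]
    split_ifs <;> simp_all [Nat.even_add_one]
  · simp

lemma Jm_mulVec_Jm_mulVec (x : G n) : Jm n *ᵥ (Jm n *ᵥ x) = -x := by
  funext k
  rcases Nat.even_or_odd (k : ℕ) with hk | hk
  · have hlt : (k : ℕ) + 1 < 2 * n := by
      obtain ⟨c, hc⟩ := hk; have := k.isLt; omega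
    rw [Jm_mulVec_apply_of_even _ hk (j := ⟨k + 1, hlt⟩) rfl,
      Jm_mulVec_apply_of_odd _ hk (j := k) rfl, Pi.neg_apply]
  · obtain ⟨c, hc⟩ := hk
    have hj : Even (2 * c) := even_two_mul c
    rw [Jm_mulVec_apply_of_odd _ (j := ⟨2 * c, by omega⟩) hj hc,
      Jm_mulVec_apply_of_even _ hj (j := k) hc, Pi.neg_apply]

lemma inA_Jm_mulVec {x : G n} (hx : inA x) : inA (Jm n *ᵥ x) := by
  intro k hk
  obtain hk0 | hk1 : (k : ℕ) = 0 ∨ (k : ℕ) = 1 := by omega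
  · rw [Jm_mulVec_apply_of_even _ (by simp [hk0]) (j := ⟨1, by omega⟩) (by simp [hk0]),
      hx _ (by simp), neg_zero]
  · exact (Jm_mulVec_apply_of_odd _ (j := ⟨0, by omega⟩) (by simp) (by simp [hk1])).trans
      (hx _ (by simp))

lemma Jm_mulVec_E_one : Jm n *ᵥ E n 1 = -E n 0 := by
  funext k
  have h1 : 1 < 2 * n := by have := k.isLt; omega
  rw [mulVec, dotProduct, Finset.sum_eq_single ⟨1, h1⟩]
  · by_cases hk : (k : ℕ) = 0 <;> simp [E, Jm, hk]
  · intro m _ hm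
    simp [E, show (m : ℕ) ≠ 1 from fun h => hm (Fin.ext h)]
  · simp

/-- `ω(Ly, z) + ω(y, Lz) = -(L·ω)(y, z)`, written so that it is visibly alternating without
using that `J` is skew. -/
def omAct (L : Matrix (Fin (2*n)) (Fin (2*n)) ℝ) (y z : G n) : ℝ :=
  om (L *ᵥ y) z - om (L *ᵥ z) y

lemma dOm_eq (L : Matrix (Fin (2*n)) (Fin (2*n)) ℝ) (x y z : G n) :
    dOm L x y z = -inn x (E n 0) * omAct L y z + inn y (E n 0) * omAct L x z
      - inn z (E n 0) * omAct L x y := by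
  simp only [dOm, omAct, br, om, inn_eq_dotProduct, mulVec_sub, mulVec_smul, sub_dotProduct,
    smul_dotProduct, smul_eq_mul]
  ring

lemma omAct_eq_sub (L : Matrix (Fin (2*n)) (Fin (2*n)) ℝ) (y z : G n) (a b : ℝ) (e : G n) :
    omAct L (y - a • e) (z - b • e) =
      omAct L y z - a * omAct L e z + b * omAct L e y := by
  simp only [omAct, om, inn_eq_dotProduct, mulVec_sub, mulVec_smul, sub_dotProduct,
    dotProduct_sub, smul_dotProduct, dotProduct_smul, smul_eq_mul]
  ring

/-- Since `[u, u] = 0`, the alternating form `dω` is determined by its values on `e₀ ∧ u ∧ u`. -/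
lemma forall_dOm_eq_zero_iff (hn : 0 < n) (L : Matrix (Fin (2*n)) (Fin (2*n)) ℝ) :
    (∀ x y z : G n, dOm L x y z = 0) ↔
      ∀ y z : G n, inn y (E n 0) = 0 → inn z (E n 0) = 0 → omAct L y z = 0 := by
  have he₀ : inn (E n 0) (E n 0) = 1 := by simp [inn_E (E n 0) (by omega : 0 < 2 * n), E]
  have hperp : ∀ y : G n, inn (y - inn y (E n 0) • E n 0) (E n 0) = 0 := by
    intro y
    simp only [inn_eq_dotProduct, sub_dotProduct, smul_dotProduct] at he₀ ⊢
    simp [he₀]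
  constructor
  · intro h y z hy hz
    simpa [dOm_eq, he₀, hy, hz] using h (E n 0) y z
  · intro h x y z
    have hyz : ∀ y z : G n,
        omAct L y z = inn y (E n 0) * omAct L (E n 0) z - inn z (E n 0) * omAct L (E n 0) y := by
      intro y z
      have hyz₀ := h _ _ (hperp y) (hperp z)
      rw [omAct_eq_sub] at hyz₀
      linarith
    rw [dOm_eq, hyz y z, hyz x z, hyz x y]
    ring

def spDefect (M : Matrix (Fin (2*n)) (Fin (2*n)) ℝ) (x : G n) : G n :=
  Mᵀ *ᵥ (Jm n *ᵥ x) + Jm n *ᵥ (M *ᵥ x)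

lemma omAct_eq_spDefect (M : Matrix (Fin (2*n)) (Fin (2*n)) ℝ) (y z : G n) :
    omAct M y z = spDefect M y ⬝ᵥ z := by
  have hJ : y ᵥ* Jm n = -(Jm n *ᵥ y) := by rw [← mulVec_transpose, Jm_transpose, neg_mulVec]
  rw [omAct, om, om, inn_eq_dotProduct, inn_eq_dotProduct, dotProduct_comm _ y,
    dotProduct_mulVec, dotProduct_mulVec, hJ, spDefect, mulVec_transpose, add_dotProduct]
  simp only [neg_vecMul, neg_dotProduct]
  ring

lemma om_E_one (z : G n) : om (E n 1) z = -inn z (E n 0) := by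
  rw [om, Jm_mulVec_E_one, inn_eq_dotProduct, inn_eq_dotProduct, neg_dotProduct, dotProduct_comm]

lemma Lm_mulVec (μ : ℝ) (v₀ w₀ : G n) (D : Matrix (Fin (2*n)) (Fin (2*n)) ℝ) (y : G n) :
    Lm μ v₀ w₀ D *ᵥ y =
      (μ * inn y (E n 1) + inn w₀ y) • E n 1 + inn y (E n 1) • v₀ + D *ᵥ y := by
  funext k
  simp only [Lm, mulVec, dotProduct, of_apply, inn, E, add_mul, Finset.sum_add_distrib,
    Pi.add_apply, Pi.smul_apply, smul_eq_mul, Finset.mul_sum, Finset.sum_mul]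
  by_cases hk : (k : ℕ) = 1
  · simp [hk, mul_comm]
    ring
  · simp [hk, mul_comm]

lemma omAct_Lm {y z : G n} (hy : inn y (E n 0) = 0) (hz : inn z (E n 0) = 0)
    (μ : ℝ) (v₀ w₀ : G n) (D : Matrix (Fin (2*n)) (Fin (2*n)) ℝ) :
    omAct (Lm μ v₀ w₀ D) y z =
      inn y (E n 1) * om v₀ z - inn z (E n 1) * om v₀ y + omAct D y z := by
  rw [inn_eq_dotProduct, dotProduct_comm] at hy hz
  simp only [omAct, om, Lm_mulVec, mulVec_add, mulVec_smul, Jm_mulVec_E_one, inn_eq_dotProduct,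
    add_dotProduct, smul_dotProduct, neg_dotProduct, smul_eq_mul, hy, hz]
  ring

lemma inA_mulVec {M : Matrix (Fin (2*n)) (Fin (2*n)) ℝ}
    (hM : ∀ k l : Fin (2*n), (k : ℕ) < 2 → M k l = 0) (x : G n) : inA (M *ᵥ x) := by
  intro k hk
  simp [mulVec, dotProduct, hM k _ hk]

lemma mulVec_E_eq_zero {M : Matrix (Fin (2*n)) (Fin (2*n)) ℝ} {j : ℕ}
    (hM : ∀ k l : Fin (2*n), (l : ℕ) = j → M k l = 0) : M *ᵥ E n j = 0 := by
  funext k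
  simp only [mulVec, dotProduct, E, mul_ite, mul_one, mul_zero, Pi.zero_apply]
  exact Finset.sum_eq_zero fun l _ => by by_cases h : (l : ℕ) = j <;> simp [h, hM k l]

lemma inA_spDefect {D : Matrix (Fin (2*n)) (Fin (2*n)) ℝ} (hD : DinA D) (x : G n) :
    inA (spDefect D x) := by
  intro k hk
  have h₁ : inA (Dᵀ *ᵥ (Jm n *ᵥ x)) := inA_mulVec (fun k l hk => hD l k (Or.inr hk)) _
  have h₂ : inA (Jm n *ᵥ (D *ᵥ x)) :=
    inA_Jm_mulVec (inA_mulVec (fun k l hk => hD k l (Or.inl hk)) _)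
  rw [spDefect, Pi.add_apply, h₁ k hk, h₂ k hk, add_zero]

lemma spDefect_E_one {D : Matrix (Fin (2*n)) (Fin (2*n)) ℝ} (hD : DinA D) :
    spDefect D (E n 1) = 0 := by
  rw [spDefect, Jm_mulVec_E_one, mulVec_neg,
    mulVec_E_eq_zero (M := Dᵀ) (fun k l hl => hD l k (Or.inl (by omega))),
    mulVec_E_eq_zero (M := D) (fun k l hl => hD k l (Or.inr (by omega)))]
  simp

lemma inA_sub_smul_E_one {y : G n} (hy : inn y (E n 0) = 0) :
    inA (y - inn y (E n 1) • E n 1) := by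
  intro k hk
  have h2n : 1 < 2 * n := by have := k.isLt; omega
  obtain hk0 | hk1 : (k : ℕ) = 0 ∨ (k : ℕ) = 1 := by omega
  · obtain rfl : k = ⟨0, Nat.zero_lt_of_lt h2n⟩ := Fin.ext hk0
    rw [inn_E y (Nat.zero_lt_of_lt h2n)] at hy
    simpa [E] using hy
  · obtain rfl : k = ⟨1, h2n⟩ := Fin.ext hk1
    simp [E, inn_E y h2n]

lemma forall_omAct_Lm_eq_zero_iff (hn : 0 < n) (μ : ℝ) {v₀ : G n} (w₀ : G n) (hv : inA v₀)
    {D : Matrix (Fin (2*n)) (Fin (2*n)) ℝ} (hD : DinA D) :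
    (∀ y z : G n, inn y (E n 0) = 0 → inn z (E n 0) = 0 → omAct (Lm μ v₀ w₀ D) y z = 0) ↔
      v₀ = 0 ∧ ∀ x : G n, inA x → spDefect D x = 0 := by
  have he₁ : inn (E n 1) (E n 1) = 1 := by simp [inn_E (E n 1) (by omega : 1 < 2 * n), E]
  have he₁₀ : inn (E n 1) (E n 0) = 0 := by simp [inn_E (E n 1) (by omega : 0 < 2 * n), E]
  constructor
  · intro h
    refine ⟨?_, fun x hx => ?_⟩
    · have hJv := inA_Jm_mulVec hv
      have hvJv := h _ _ he₁₀ (inn_E_of_inA hJv two_pos)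
      rw [omAct_Lm he₁₀ (inn_E_of_inA hJv two_pos), omAct_eq_spDefect, spDefect_E_one hD, he₁,
        inn_E_of_inA hJv one_lt_two, om, inn_eq_dotProduct] at hvJv
      have hJv₀ : Jm n *ᵥ v₀ = 0 := dotProduct_self_eq_zero.mp (by simpa using hvJv)
      simpa [hJv₀] using (Jm_mulVec_Jm_mulVec v₀).symm
    · have hQx := inA_spDefect hD x
      have hxQx := h _ _ (inn_E_of_inA hx two_pos) (inn_E_of_inA hQx two_pos)
      rw [omAct_Lm (inn_E_of_inA hx two_pos) (inn_E_of_inA hQx two_pos), omAct_eq_spDefect,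
        inn_E_of_inA hx one_lt_two, inn_E_of_inA hQx one_lt_two] at hxQx
      exact dotProduct_self_eq_zero.mp (by simpa using hxQx)
  · rintro ⟨rfl, hQ⟩ y z hy hz
    have hQy : spDefect D y = spDefect D (y - inn y (E n 1) • E n 1)
        + inn y (E n 1) • spDefect D (E n 1) := by
      simp only [spDefect, mulVec_sub, mulVec_smul, smul_add]
      abel
    rw [omAct_Lm hy hz, omAct_eq_spDefect, hQy, hQ _ (inA_sub_smul_E_one hy), spDefect_E_one hD]
    simp [om, inn]

end

theorem statement7_general (n : ℕ) (hn : 2 ≤ n) (μ : ℝ) (v₀ w₀ : G n) (hv : inA v₀)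
    (D : Matrix (Fin (2*n)) (Fin (2*n)) ℝ) (hD : DinA D) :
    (∀ x y z : G n, dOm (Lm μ v₀ w₀ D) x y z = 0)
      ↔ (v₀ = 0
          ∧ (∀ x : G n, inA x →
              Dᵀ.mulVec ((Jm n).mulVec x) + (Jm n).mulVec (D.mulVec x) = 0)) := by
  rw [forall_dOm_eq_zero_iff (by omega), forall_omAct_Lm_eq_zero_iff (by omega) μ w₀ hv hD]
  rfl

/-- `dω = 0` (almost Kähler, class `W₂`) iff `v₀ = 0` and
`Dᵗ J' + J' D = 0` (i.e. `D ∈ sp(n-1,ℝ)`). -/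
theorem statement7 (n : ℕ) (hn : 2 ≤ n) (μ : ℝ) (v₀ w₀ : G n) (hv : inA v₀) (hw : inA w₀)
    (D : Matrix (Fin (2*n)) (Fin (2*n)) ℝ) (hD : DinA D) :
    (∀ x y z : G n, dOm (Lm μ v₀ w₀ D) x y z = 0)
      ↔ (v₀ = 0
          ∧ (∀ x : G n, inA x →
              Dᵀ.mulVec ((Jm n).mulVec x) + (Jm n).mulVec (D.mulVec x) = 0)) :=
  statement7_general n hn μ v₀ w₀ hv D hD
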